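/- arXiv:1507.01485 — 6 statements merged into one kernel-verified Lean document; each statement's English description precedes it below -/
import Mathlib

section
/- Let $x, y \in \mathbb{R}$ with $0 \le x \le 1/2$ and $y \ge \sqrt{1-x^2}$, and let $\xi_{m,n} = m(1 - ix/y) + n(i/y) \in \mathbb{C}$. Define $r_1 = (y^2+x^2-x)/(y^2+x^2-x+1)$, $r_2 = (1-x)/(y^2+x^2-x+1)$, $r_3 = x/(y^2+x^2-x+1)$. Then $r_1 \xi_{0,1}^2 + r_2 \xi_{1,0}^2 + r_3 \xi_{1,1}^2 = 0$ and $r_1 |\xi_{0,1}|^2 + r_2 |\xi_{1,0}|^2 + r_3 |\xi_{1,1}|^2 = 2/(y^2+x^2-x+1)$. -/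
/-!
Writing `ξ_{m,n} = m + i (n - m x) / y`, both identities are polynomial identities in `x` after
clearing the common denominator `y²`: with weights `y² + x² - x`, `1 - x`, `x`, the imaginary
parts of the squares cancel pairwise, the real parts sum to `0` and the squared norms sum to `2`.
Dividing by `y² + x² - x + 1` gives the statement.
-/

open Complex

noncomputable def latticePoint (x y : ℝ) (m n : ℤ) : ℂ :=
  m * (1 - I * x / y) + n * (I / y)

lemma latticePoint_eq (x y : ℝ) (m n : ℤ) :
    latticePoint x y m n = (m : ℝ) + ((n - m * x) / y : ℝ) * I := by
  simp only [latticePoint]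
  push_cast
  ring

lemma latticePoint_sq (x y : ℝ) (m n : ℤ) :
    latticePoint x y m n ^ 2 =
      (m ^ 2 - ((n - m * x) / y) ^ 2 : ℝ) + (2 * m * ((n - m * x) / y) : ℝ) * I := by
  rw [latticePoint_eq, add_sq, mul_pow, I_sq]
  push_cast
  ring

lemma norm_latticePoint_sq (x y : ℝ) (m n : ℤ) :
    ‖latticePoint x y m n‖ ^ 2 = m ^ 2 + ((n - m * x) / y) ^ 2 := by
  rw [latticePoint_eq, Complex.sq_norm, normSq_add_mul_I]

lemma weighted_latticePoint_sq_eq_zero (x : ℝ) {y : ℝ} (hy : y ≠ 0) :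
    ((y ^ 2 + x ^ 2 - x : ℝ) : ℂ) * latticePoint x y 0 1 ^ 2
      + ((1 - x : ℝ) : ℂ) * latticePoint x y 1 0 ^ 2 + (x : ℂ) * latticePoint x y 1 1 ^ 2 = 0 := by
  simp only [latticePoint_sq]
  apply Complex.ext <;>
    simp only [add_re, add_im, mul_re, mul_im, ofReal_re, ofReal_im, I_re, I_im, zero_re, zero_im] <;>
    push_cast <;> field_simp <;> ring

lemma weighted_norm_latticePoint_sq_eq_two (x : ℝ) {y : ℝ} (hy : y ≠ 0) :
    (y ^ 2 + x ^ 2 - x) * ‖latticePoint x y 0 1‖ ^ 2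
      + (1 - x) * ‖latticePoint x y 1 0‖ ^ 2 + x * ‖latticePoint x y 1 1‖ ^ 2 = 2 := by
  simp only [norm_latticePoint_sq]
  push_cast
  field_simp
  ring

theorem stmt_5 (x y : ℝ) (hx0 : 0 ≤ x) (hx1 : x ≤ 1/2)
    (hy : Real.sqrt (1 - x^2) ≤ y)
    (ξ : ℤ → ℤ → ℂ)
    (hξ : ∀ m n : ℤ, ξ m n = (m : ℂ) * (1 - Complex.I * x / y) + (n : ℂ) * (Complex.I / y))
    (r1 r2 r3 : ℝ)
    (hr1 : r1 = (y^2 + x^2 - x) / (y^2 + x^2 - x + 1))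
    (hr2 : r2 = (1 - x) / (y^2 + x^2 - x + 1))
    (hr3 : r3 = x / (y^2 + x^2 - x + 1)) :
    (r1 : ℂ) * (ξ 0 1)^2 + (r2 : ℂ) * (ξ 1 0)^2 + (r3 : ℂ) * (ξ 1 1)^2 = 0 ∧
    r1 * ‖ξ 0 1‖ ^ 2 + r2 * ‖ξ 1 0‖ ^ 2
      + r3 * ‖ξ 1 1‖ ^ 2 = 2 / (y^2 + x^2 - x + 1) := by
  have hy0 : y ≠ 0 := by
    have : 0 < 1 - x ^ 2 := by nlinarith
    exact ((Real.sqrt_pos.mpr this).trans_le hy).ne'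
  obtain rfl : ξ = latticePoint x y := funext₂ hξ
  subst hr1 hr2 hr3
  constructor
  · calc _ = (((y ^ 2 + x ^ 2 - x : ℝ) : ℂ) * latticePoint x y 0 1 ^ 2
            + ((1 - x : ℝ) : ℂ) * latticePoint x y 1 0 ^ 2 + (x : ℂ) * latticePoint x y 1 1 ^ 2)
            / ((y ^ 2 + x ^ 2 - x + 1 : ℝ) : ℂ) := by push_cast; ring
      _ = 0 := by rw [weighted_latticePoint_sq_eq_zero x hy0, zero_div]
  · rw [← weighted_norm_latticePoint_sq_eq_two x hy0]
    ring
end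

section
/- Let $x, y \in \mathbb{R}$ with $0 \le x \le 1/2$ and $y \ge \sqrt{1-x^2}$. Suppose $(p_\xi)$ are nonnegative reals indexed by complex numbers $\xi = \xi_{m,n} = m(1-ix/y) + n(i/y)$ with $(m,n)$ ranging over integer pairs with $m > 0$ or ($m = 0$ and $n > 0$), with finite support, satisfying $\sum p_\xi = 1$ and $\sum \xi^2 p_\xi = 0$. Then $\sum |\xi|^2 p_\xi \ge 2/(y^2+x^2-x+1)$. -/
/-!
Minimizing `∑ p |ξ|²` over probability vectors with `∑ p ξ² = 0` is a linear program; a dual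
certificate is a complex multiplier `c` with `|ξ|² + Re (c ξ²) ≥ 2 / (y² + x² - x + 1)` at every
admissible lattice point, since averaging against `p` kills the `Re (c ξ²)` term. For
`ξ = m (1 - i x / y) + n (i / y)` the multiplier `dualCoeff x y` makes `|ξ|² + Re (c ξ²)` equal
to `2 (m² - m n + n²) / (y² + x² - x + 1)`, and the hexagonal form `m² - m n + n²` is at least `1`
at every nonzero integer point.
-/

open Complex Finset

theorem le_sum_mul_of_le_add_re_mul {ι : Type*} {s : Finset ι} {p f : ι → ℝ} {w : ι → ℂ}
    (c : ℂ) {S : ℝ} (hp : ∀ q ∈ s, 0 ≤ p q) (hsum : ∑ q ∈ s, p q = 1)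
    (hw : ∑ q ∈ s, (p q : ℂ) * w q = 0) (h : ∀ q ∈ s, S ≤ f q + (c * w q).re) :
    S ≤ ∑ q ∈ s, p q * f q :=
  calc S = ∑ q ∈ s, p q * S := by rw [← sum_mul, hsum, one_mul]
    _ ≤ ∑ q ∈ s, p q * (f q + (c * w q).re) :=
      sum_le_sum fun q hq => mul_le_mul_of_nonneg_left (h q hq) (hp q hq)
    _ = ∑ q ∈ s, p q * f q + (c * ∑ q ∈ s, (p q : ℂ) * w q).re := by
      simp only [mul_add, sum_add_distrib, mul_sum, re_sum, mul_left_comm c, re_ofReal_mul]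
    _ = ∑ q ∈ s, p q * f q := by rw [hw, mul_zero, zero_re, add_zero]

theorem one_le_sq_sub_mul_add_sq {m n : ℤ} (h : (m, n) ≠ 0) : 1 ≤ m ^ 2 - m * n + n ^ 2 := by
  by_contra! hlt
  have hn : n = 0 := by nlinarith [sq_nonneg (2 * m - n)]
  have hm : m = 0 := by subst hn; nlinarith
  exact h (by simp [hm, hn])

noncomputable def dualCoeff (x y : ℝ) : ℂ :=
  ⟨1 - 2 * y ^ 2 / (y ^ 2 + x ^ 2 - x + 1), y * (1 - 2 * x) / (y ^ 2 + x ^ 2 - x + 1)⟩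

theorem norm_sq_add_re_dualCoeff_mul_sq (x y : ℝ) (hy : y ≠ 0) (m n : ℝ) :
    ‖(m : ℂ) * (1 - I * x / y) + n * (I / y)‖ ^ 2
      + (dualCoeff x y * ((m : ℂ) * (1 - I * x / y) + n * (I / y)) ^ 2).re
      = 2 * (m ^ 2 - m * n + n ^ 2) / (y ^ 2 + x ^ 2 - x + 1) := by
  have hD : y ^ 2 + x ^ 2 - x + 1 ≠ 0 := by nlinarith [sq_nonneg (x - 1 / 2)]
  rw [Complex.sq_norm, normSq_apply]
  simp only [add_re, mul_re, ofReal_re, sub_re, one_re, div_re, I_re, zero_mul, I_im, ofReal_im,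
    mul_zero, sub_self, normSq_ofReal, zero_div, mul_im, one_mul, zero_add, add_zero, sub_zero, mul_one,
    sub_im, one_im, div_im, zero_sub, mul_neg, neg_zero, div_self_mul_self', add_im, dualCoeff, sq]
  field_simp
  ring

theorem stmt_6 (x y : ℝ) (hx0 : 0 ≤ x) (hx1 : x ≤ 1/2)
    (hy : Real.sqrt (1 - x^2) ≤ y)
    (ξ : ℤ → ℤ → ℂ)
    (hξ : ∀ m n : ℤ, ξ m n = (m : ℂ) * (1 - Complex.I * x / y) + (n : ℂ) * (Complex.I / y))
    (s : Finset (ℤ × ℤ)) (p : ℤ × ℤ → ℝ)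
    (hs : ∀ q ∈ s, 0 < q.1 ∨ (q.1 = 0 ∧ 0 < q.2))
    (hp : ∀ q ∈ s, 0 ≤ p q)
    (hsum : ∑ q ∈ s, p q = 1)
    (hconf : ∑ q ∈ s, (p q : ℂ) * (ξ q.1 q.2)^2 = 0) :
    2 / (y^2 + x^2 - x + 1) ≤ ∑ q ∈ s, p q * ‖ξ q.1 q.2‖ ^ 2 := by
  have hy0 : y ≠ 0 := ((Real.sqrt_pos.2 (by nlinarith)).trans_le hy).ne'
  have hD : 0 < y ^ 2 + x ^ 2 - x + 1 := by nlinarith [sq_nonneg (x - 1 / 2)]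
  refine le_sum_mul_of_le_add_re_mul (dualCoeff x y) hp hsum hconf fun q hq => ?_
  have hq0 : (q.1, q.2) ≠ 0 := by
    rcases hs q hq with hm | ⟨-, hn⟩
    · simp [Prod.ext_iff, hm.ne']
    · simp [Prod.ext_iff, hn.ne']
  have hform : (1 : ℝ) ≤ q.1 ^ 2 - q.1 * q.2 + q.2 ^ 2 := by
    exact_mod_cast one_le_sq_sub_mul_add_sq hq0
  have hid := norm_sq_add_re_dualCoeff_mul_sq x y hy0 q.1 q.2
  push_cast at hid
  rw [hξ, hid]
  gcongr
  linarith
end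

section
/- Let $a, b \ge 0$ with $a+b < 1$, set $\tau = \sqrt{(1-b+a)/(1-b-a)}$ and $k = \sqrt{4ab/(1-(b-a)^2)}$. Then $0 \le k \le 1$ and, with $c_1 = \frac{a((1-b)^2 - a^2)(1-(b-a)^2)}{(1+b)^2 - a^2}$ and $c_2 = \frac{(1-(b-a)^2)^2}{(1+b)^2 - a^2}$, the algebraic identity $(1-a)(1-b+a)^2 - 2a(1-(b-a)^2)s + 4a^2 b s^2 = c_1(1 - 2s + k^2 s^2) + c_2(1 - 2k^2 s + k^4 s^2)$ holds for all real $s$ (substituting $s = \sin^2\theta$). -/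
theorem stmt_10 (a b : ℝ) (ha : 0 ≤ a) (hb : 0 ≤ b) (hab : a + b < 1)
    (k c1 c2 : ℝ)
    (hk : k = Real.sqrt (4 * a * b / (1 - (b - a)^2)))
    (hc1 : c1 = a * ((1 - b)^2 - a^2) * (1 - (b - a)^2) / ((1 + b)^2 - a^2))
    (hc2 : c2 = (1 - (b - a)^2)^2 / ((1 + b)^2 - a^2)) :
    0 ≤ k ∧ k ≤ 1 ∧
    ∀ s : ℝ,
      (1 - a) * (1 - b + a)^2 - 2 * a * (1 - (b - a)^2) * s + 4 * a^2 * b * s^2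
        = c1 * (1 - 2 * s + k^2 * s^2) + c2 * (1 - 2 * k^2 * s + k^4 * s^2) := by
  have hd : (0:ℝ) < 1 - (b - a)^2 := by nlinarith [sq_nonneg (b - a), sq_nonneg (a + b)]
  have hd2 : (0:ℝ) < (1 + b)^2 - a^2 := by nlinarith
  have hnum : (0:ℝ) ≤ 4 * a * b / (1 - (b - a)^2) :=
    div_nonneg (by positivity) hd.le
  have hk0 : 0 ≤ k := hk ▸ Real.sqrt_nonneg _
  have hk2 : k^2 = 4 * a * b / (1 - (b - a)^2) := by
    rw [hk, Real.sq_sqrt hnum]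
  have hk1 : k ≤ 1 := by
    nlinarith [hk2, div_le_one_of_le₀ (by nlinarith : 4 * a * b ≤ 1 - (b - a)^2) hd.le]
  refine ⟨hk0, hk1, fun s => ?_⟩
  rw [hc1, hc2]
  have hk4 : k^4 = (4 * a * b / (1 - (b - a)^2))^2 := by
    rw [show k^4 = (k^2)^2 by ring, hk2]
  rw [hk2, hk4]
  field_simp
  ring
end

section
/- Let $r_1, r_2, r_3 > 0$ with $r_1 + r_2 + r_3 = 1$, $r_1 \le 2/3$, $r_2 + r_3 \le 2/3$. Define $Q(\lambda,\mu,\nu) = (1 - (\lambda+\mu+\nu)^2)(1 - \frac{3}{2}(\lambda-\mu-\nu)^2) - (1 - \frac{\lambda^2}{r_1} - \frac{\mu^2}{r_2} - \frac{\nu^2}{r_3})(1 - (\lambda+\mu+\nu)^2 + 3\lambda(\mu+\nu))$. Then $Q(\lambda,\mu,\nu) \ge 0$ for all $\lambda, \mu, \nu \ge 0$ with $\frac{\lambda^2}{r_1} + \frac{\mu^2}{r_2} + \frac{\nu^2}{r_3} < 1$. -/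
theorem stmt_14 (r1 r2 r3 : ℝ) (h1 : 0 < r1) (h2 : 0 < r2) (h3 : 0 < r3)
    (hsum : r1 + r2 + r3 = 1) (hr1 : r1 ≤ 2/3) (hr23 : r2 + r3 ≤ 2/3)
    (l m n : ℝ) (hl : 0 ≤ l) (hm : 0 ≤ m) (hn : 0 ≤ n)
    (hell : l^2 / r1 + m^2 / r2 + n^2 / r3 < 1) :
    0 ≤ (1 - (l + m + n)^2) * (1 - (3/2) * (l - m - n)^2)
        - (1 - l^2 / r1 - m^2 / r2 - n^2 / r3)
          * (1 - (l + m + n)^2 + 3 * l * (m + n)) := by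
  -- Cauchy–Schwarz: (l+m+n)^2 ≤ E since r1+r2+r3 = 1
  have hCS : (l + m + n)^2 ≤ l^2 / r1 + m^2 / r2 + n^2 / r3 := by
    rw [div_add_div _ _ h1.ne' h2.ne', div_add_div _ _ (mul_pos h1 h2).ne' h3.ne',
      le_div_iff₀ (by positivity)]
    have id : (l^2*r2 + r1*m^2)*r3 + r1*r2*n^2 - (l+m+n)^2*(r1*r2*r3)
        = r3*(l*r2 - m*r1)^2 + r2*(l*r3 - n*r1)^2 + r1*(m*r3 - n*r2)^2 := by
      linear_combination -(l^2*r2*r3 + m^2*r1*r3 + n^2*r1*r2) * hsum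
    nlinarith [mul_nonneg h3.le (sq_nonneg (l*r2 - m*r1)),
      mul_nonneg h2.le (sq_nonneg (l*r3 - n*r1)),
      mul_nonneg h1.le (sq_nonneg (m*r3 - n*r2)), id]
  -- lower bound for E from r1 ≤ 2/3, r2+r3 ≤ 2/3
  have hE2 : (3/2)*l^2 + (3/2)*(m+n)^2 ≤ l^2 / r1 + m^2 / r2 + n^2 / r3 := by
    have hA : (3/2)*l^2 ≤ l^2 / r1 := by
      rw [le_div_iff₀ h1]
      nlinarith [sq_nonneg l]
    have hB : (3/2)*(m+n)^2 ≤ m^2 / r2 + n^2 / r3 := by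
      rw [div_add_div _ _ h2.ne' h3.ne', le_div_iff₀ (mul_pos h2 h3)]
      nlinarith [sq_nonneg (m*r3 - n*r2),
        mul_nonneg (by positivity : (0:ℝ) ≤ m^2*r3 + n^2*r2)
          (by linarith : (0:ℝ) ≤ 2/3 - (r2 + r3))]
    linarith
  have h1s : 0 ≤ 1 - (l + m + n)^2 := by linarith
  have ha : 0 ≤ (l^2 / r1 + m^2 / r2 + n^2 / r3) - (3/2)*(l - m - n)^2 - 3*l*(m+n) := by
    nlinarith [hE2]
  have key : (1 - (l + m + n)^2) * (1 - (3/2) * (l - m - n)^2)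
        - (1 - l^2 / r1 - m^2 / r2 - n^2 / r3)
          * (1 - (l + m + n)^2 + 3 * l * (m + n))
      = ((l^2 / r1 + m^2 / r2 + n^2 / r3) - (3/2)*(l - m - n)^2 - 3*l*(m+n))
          * (1 - (l + m + n)^2)
        + 3*(l*(m+n)) * ((l^2 / r1 + m^2 / r2 + n^2 / r3) - (l + m + n)^2) := by
    ring
  rw [key]
  have hp : 0 ≤ l*(m+n) := mul_nonneg hl (by linarith)
  have := sub_nonneg.mpr hCS
  positivity
end

section
/- Let $x, y \in \mathbb{R}$ with $0 \le x \le 1/2$, $y \ge \sqrt{1-x^2}$, and define $f_\tau : \mathbb{R}^2 \to \mathbb{R}^6$ by $f_\tau(u,v) = (\sqrt{r_1}\cos(2\pi v/y), \sqrt{r_1}\sin(2\pi v/y), \sqrt{r_2}\cos(2\pi(u - vx/y)), \sqrt{r_2}\sin(2\pi(u - vx/y)), \sqrt{r_3}\cos(2\pi(u - v(x-1)/y)), \sqrt{r_3}\sin(2\pi(u - v(x-1)/y)))$ with $r_1, r_2, r_3$ as usual. Then $|f_\tau(u,v)| = 1$ for all $(u,v)$, and the pullback metric satisfies $|df_\tau|^2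 = \frac{4\pi^2}{y^2 + x^2 - x + 1}(du^2 + dv^2)$, i.e., $f_\tau$ is a homothetic (conformal) immersion into $S^5$. -/
/-!
Each pair of coordinates of `f` traces a circle of radius `√rₖ` with a phase `θₖ` that is
affine in `(u, v)`. Hence `|f|² = r₁ + r₂ + r₃`, each partial derivative of the `k`-th pair has
length `√rₖ |∂θₖ|`, and the `u`- and `v`-derivatives of one pair have inner product
`rₖ ∂ᵤθₖ ∂ᵥθₖ`. What remains are rational identities in `x, y` for the weights `rₖ`.
-/

open Real

section Circle

variable (c : ℝ)

theorem mul_cos_sq_add_mul_sin_sq (θ : ℝ) : (c * cos θ) ^ 2 + (c * sin θ) ^ 2 = c ^ 2 := by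
  linear_combination c ^ 2 * sin_sq_add_cos_sq θ

theorem deriv_mul_cos_comp {θ : ℝ → ℝ} {θ' t : ℝ} (h : HasDerivAt θ θ' t) :
    deriv (fun s => c * cos (θ s)) t = -(c * sin (θ t) * θ') := by
  rw [(h.cos.const_mul c).deriv]; ring

theorem deriv_mul_sin_comp {θ : ℝ → ℝ} {θ' t : ℝ} (h : HasDerivAt θ θ' t) :
    deriv (fun s => c * sin (θ s)) t = c * cos (θ t) * θ' := by
  rw [(h.sin.const_mul c).deriv]; ring

theorem deriv_mul_cos_comp_sq_add_deriv_mul_sin_comp_sq {θ : ℝ → ℝ} {θ' t : ℝ}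
    (h : HasDerivAt θ θ' t) :
    deriv (fun s => c * cos (θ s)) t ^ 2 + deriv (fun s => c * sin (θ s)) t ^ 2
      = c ^ 2 * θ' ^ 2 := by
  rw [deriv_mul_cos_comp c h, deriv_mul_sin_comp c h]
  linear_combination c ^ 2 * θ' ^ 2 * sin_sq_add_cos_sq (θ t)

theorem deriv_mul_cos_comp_mul_add_deriv_mul_sin_comp_mul {θ₁ θ₂ : ℝ → ℝ}
    {a b t₁ t₂ : ℝ} (h₁ : HasDerivAt θ₁ a t₁) (h₂ : HasDerivAt θ₂ b t₂) (h : θ₁ t₁ = θ₂ t₂) :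
    deriv (fun s => c * cos (θ₁ s)) t₁ * deriv (fun s => c * cos (θ₂ s)) t₂
      + deriv (fun s => c * sin (θ₁ s)) t₁ * deriv (fun s => c * sin (θ₂ s)) t₂
      = c ^ 2 * a * b := by
  rw [deriv_mul_cos_comp c h₁, deriv_mul_cos_comp c h₂, deriv_mul_sin_comp c h₁,
    deriv_mul_sin_comp c h₂, h]
  linear_combination c ^ 2 * a * b * sin_sq_add_cos_sq (θ₂ t₂)

end Circle

theorem Fin.sum_univ_six_pairs {M : Type*} [AddCommMonoid M] (g : Fin 6 → M) :
    ∑ i, g i = (g 0 + g 1) + (g 2 + g 3) + (g 4 + g 5) := by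
  simp only [Fin.sum_univ_six, add_assoc]

theorem hasDerivAt_const_mul_sub (k w u : ℝ) :
    HasDerivAt (fun u' => k * (u' - w)) k u := by
  simpa using ((hasDerivAt_id u).sub_const w).const_mul k

theorem hasDerivAt_const_mul_sub_mul_div (k u m y v : ℝ) :
    HasDerivAt (fun v' => k * (u - v' * m / y)) (-(k * m / y)) v :=
  ((((hasDerivAt_id v).mul_const m).div_const y).const_sub u).const_mul k
    |>.congr_deriv (by ring)

theorem hasDerivAt_const_mul_div (k y v : ℝ) :
    HasDerivAt (fun v' => k * v' / y) (k / y) v := by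
  simpa using ((hasDerivAt_id v).const_mul k).div_const y

theorem stmt_17 (x y : ℝ) (hx0 : 0 ≤ x) (hx1 : x ≤ 1/2)
    (hy : Real.sqrt (1 - x^2) ≤ y)
    (r1 r2 r3 : ℝ)
    (hr1 : r1 = (y^2 + x^2 - x) / (y^2 + x^2 - x + 1))
    (hr2 : r2 = (1 - x) / (y^2 + x^2 - x + 1))
    (hr3 : r3 = x / (y^2 + x^2 - x + 1))
    (f : ℝ → ℝ → Fin 6 → ℝ)
    (hf : ∀ u v : ℝ, f u v =
      ![Real.sqrt r1 * Real.cos (2 * π * v / y),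
        Real.sqrt r1 * Real.sin (2 * π * v / y),
        Real.sqrt r2 * Real.cos (2 * π * (u - v * x / y)),
        Real.sqrt r2 * Real.sin (2 * π * (u - v * x / y)),
        Real.sqrt r3 * Real.cos (2 * π * (u - v * (x - 1) / y)),
        Real.sqrt r3 * Real.sin (2 * π * (u - v * (x - 1) / y))]) :
    (∀ u v : ℝ, ∑ i : Fin 6, (f u v i)^2 = 1) ∧
    (∀ u v : ℝ, ∑ i : Fin 6, (deriv (fun u' => f u' v i) u)^2
        = 4 * π^2 / (y^2 + x^2 - x + 1)) ∧
    (∀ u v : ℝ, ∑ i : Fin 6, (deriv (fun v' => f u v' i) v)^2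
        = 4 * π^2 / (y^2 + x^2 - x + 1)) ∧
    (∀ u v : ℝ, ∑ i : Fin 6,
        (deriv (fun u' => f u' v i) u) * (deriv (fun v' => f u v' i) v) = 0) := by
  have hy0 : 0 < y := (sqrt_pos.mpr (by nlinarith)).trans_le hy
  have hy2 : 1 - x ^ 2 ≤ y ^ 2 := (sqrt_le_iff.mp hy).2
  have hD : 0 < y ^ 2 + x ^ 2 - x + 1 := by nlinarith
  have hs1 : sqrt r1 ^ 2 = r1 := sq_sqrt (hr1 ▸ div_nonneg (by nlinarith) hD.le)
  have hs2 : sqrt r2 ^ 2 = r2 := sq_sqrt (hr2 ▸ div_nonneg (by linarith) hD.le)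
  have hs3 : sqrt r3 ^ 2 = r3 := sq_sqrt (hr3 ▸ div_nonneg hx0 hD.le)
  refine ⟨fun u v => ?_, fun u v => ?_, fun u v => ?_, fun u v => ?_⟩ <;>
    simp only [hf, Fin.sum_univ_six_pairs, Matrix.cons_val_zero, Matrix.cons_val_one,
      Matrix.cons_val]
  · rw [mul_cos_sq_add_mul_sin_sq, mul_cos_sq_add_mul_sin_sq, mul_cos_sq_add_mul_sin_sq,
      hs1, hs2, hs3, hr1, hr2, hr3]
    field_simp
    ring
  · rw [deriv_mul_cos_comp_sq_add_deriv_mul_sin_comp_sq _ (hasDerivAt_const u _),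
      deriv_mul_cos_comp_sq_add_deriv_mul_sin_comp_sq _ (hasDerivAt_const_mul_sub _ _ u),
      deriv_mul_cos_comp_sq_add_deriv_mul_sin_comp_sq _ (hasDerivAt_const_mul_sub _ _ u),
      hs1, hs2, hs3, hr1, hr2, hr3]
    field_simp
    ring
  · rw [deriv_mul_cos_comp_sq_add_deriv_mul_sin_comp_sq _ (hasDerivAt_const_mul_div _ y v),
      deriv_mul_cos_comp_sq_add_deriv_mul_sin_comp_sq _
        (hasDerivAt_const_mul_sub_mul_div _ u x y v),
      deriv_mul_cos_comp_sq_add_deriv_mul_sin_comp_sq _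
        (hasDerivAt_const_mul_sub_mul_div _ u (x - 1) y v),
      hs1, hs2, hs3, hr1, hr2, hr3]
    field_simp
    ring
  · rw [deriv_mul_cos_comp_mul_add_deriv_mul_sin_comp_mul _ (hasDerivAt_const u _)
        (hasDerivAt_const_mul_div _ y v) rfl,
      deriv_mul_cos_comp_mul_add_deriv_mul_sin_comp_mul _ (hasDerivAt_const_mul_sub _ _ u)
        (hasDerivAt_const_mul_sub_mul_div _ u x y v) rfl,
      deriv_mul_cos_comp_mul_add_deriv_mul_sin_comp_mul _ (hasDerivAt_const_mul_sub _ _ u)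
        (hasDerivAt_const_mul_sub_mul_div _ u (x - 1) y v) rfl,
      hs1, hs2, hs3, hr1, hr2, hr3]
    field_simp
    ring
end

section
/- For $x, y$ with $0 \le x \le 1/2$ and $y \ge \sqrt{1-x^2}$, the quantity $\frac{\pi^2(y^4 + (1+2x-2x^2)y^2 - 3x^2(1-x)^2)}{y^3}$ is at least $2\pi^2$, with equality if and only if $(x, y) = (0, 1)$. -/
theorem stmt_19 (x y : ℝ) (hx0 : 0 ≤ x) (hx1 : x ≤ 1/2)
    (hy : Real.sqrt (1 - x^2) ≤ y) :
    2 * Real.pi^2 ≤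
      Real.pi^2 * (y^4 + (1 + 2*x - 2*x^2) * y^2 - 3 * x^2 * (1 - x)^2) / y^3 ∧
    (Real.pi^2 * (y^4 + (1 + 2*x - 2*x^2) * y^2 - 3 * x^2 * (1 - x)^2) / y^3
        = 2 * Real.pi^2 ↔ x = 0 ∧ y = 1) := by
  have hx2 : (0:ℝ) < 1 - x^2 := by nlinarith
  have hs : Real.sqrt (1 - x^2) ^ 2 = 1 - x^2 := Real.sq_sqrt hx2.le
  have hsn : 0 ≤ Real.sqrt (1 - x^2) := Real.sqrt_nonneg _
  have hy2 : 1 - x^2 ≤ y^2 := by nlinarith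
  have hypos : 0 < y := lt_of_lt_of_le (Real.sqrt_pos.mpr hx2) hy
  have hy3 : (0:ℝ) < y^3 := pow_pos hypos 3
  have hpi : (0:ℝ) < Real.pi^2 := pow_pos Real.pi_pos 2
  have h1 : 0 ≤ y^2 * (y-1)^2 := by positivity
  have h2 : 0 ≤ 2*x*(1-x)*(y^2 - (1 - x^2)) :=
    mul_nonneg (mul_nonneg (by linarith) (by linarith)) (by linarith)
  have h3 : 0 ≤ x*(1-x)^2*(2-x) :=
    mul_nonneg (mul_nonneg hx0 (sq_nonneg _)) (by linarith)
  have key : 2*y^3 ≤ y^4 + (1 + 2*x - 2*x^2) * y^2 - 3 * x^2 * (1 - x)^2 := by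
    nlinarith [h1, h2, h3]
  have main : 2 * Real.pi^2 ≤
      Real.pi^2 * (y^4 + (1 + 2*x - 2*x^2) * y^2 - 3 * x^2 * (1 - x)^2) / y^3 := by
    rw [le_div_iff₀ hy3]
    nlinarith [mul_le_mul_of_nonneg_left key hpi.le]
  refine ⟨main, ?_, ?_⟩
  · intro heq
    have hN : y^4 + (1 + 2*x - 2*x^2) * y^2 - 3 * x^2 * (1 - x)^2 = 2*y^3 := by
      have h := heq
      rw [div_eq_iff hy3.ne'] at h
      have := mul_left_cancel₀ hpi.ne' (by linarith [h] : Real.pi^2 * (y^4 + (1 + 2*x - 2*x^2) * y^2 - 3 * x^2 * (1 - x)^2) = Real.pi^2 * (2*y^3))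
      linarith
    have hsum : y^2*(y-1)^2 + 2*x*(1-x)*(y^2 - (1 - x^2)) + x*(1-x)^2*(2-x) = 0 := by
      nlinarith [hN]
    have h3z : x * ((1-x)^2*(2-x)) = 0 := by
      have e : x * ((1-x)^2*(2-x)) = x*(1-x)^2*(2-x) := by ring
      rw [e]; linarith [h1, h2, h3, hsum]
    have hpos : 0 < (1-x)^2*(2-x) :=
      mul_pos (pow_pos (by linarith) 2) (by linarith)
    have hx : x = 0 := by
      rcases mul_eq_zero.mp h3z with h | h
      · exact h
      · exact absurd h hpos.ne'
    subst hx
    have h1z : y^2 * (y-1)^2 = 0 := by nlinarith [hsum]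
    have hsq : (y-1)^2 = 0 := by
      rcases mul_eq_zero.mp h1z with h | h
      · exact absurd h (by positivity)
      · exact h
    have : y - 1 = 0 := sq_eq_zero_iff.mp hsq
    exact ⟨rfl, by linarith⟩
  · rintro ⟨rfl, rfl⟩
    norm_num; ring
end
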